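/- Fix Seifert data satisfying the numerically Gorenstein congruence conditions (γ ∈ ℤ and ωᵢ·γ ≡ 1 (mod αᵢ) for every i) and with b₀ < d. Let f := max{ℓ ∈ ℤ≥0 : N(ℓ) ≤ −1} be the Frobenius number of 𝒮 and m := min{ℓ ∈ ℤ : N(ℓ) ≥ −1} = min ℳ. Then ℳ = m + 𝒮 (i.e., for every ℓ ∈ ℤ: N(ℓ) ≥ −1 ⟺ N(ℓ − m) ≥ 0) if and only if 𝒮 is symmetric (i.e., for every ℓ ∈ ℤ: N(ℓ) ≥ 0 ⟺ N(f − ℓ) ≤ −1). -/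
import Mathlib

private lemma stmt18_floor (n a : ℤ) (ha : 0 < a) : ⌊(n : ℚ) / (a : ℚ)⌋ = n / a := by
  have h : a = (a.toNat : ℤ) := (Int.toNat_of_nonneg ha.le).symm
  rw [h]
  exact_mod_cast Rat.floor_intCast_div_natCast n a.toNat

private lemma stmt18_ceil (n a : ℤ) (ha : 0 < a) : ⌈(n : ℚ) / (a : ℚ)⌉ = -((-n) / a) := by
  have : ((n : ℚ) / (a : ℚ)) = -(((-n : ℤ) : ℚ) / (a : ℚ)) := by push_cast; ring
  rw [this, Int.ceil_neg, stmt18_floor _ _ ha]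

private lemma stmt18_div_add_div (n a : ℤ) (ha : 0 < a) : (-n) / a + (n - 1) / a = -1 := by
  have h1 := Int.mul_ediv_add_emod (-n) a
  have h2 := Int.mul_ediv_add_emod (n-1) a
  have h3 := Int.emod_nonneg (-n) ha.ne'
  have h4 := Int.emod_lt_of_pos (-n) ha
  have h5 := Int.emod_nonneg (n-1) ha.ne'
  have h6 := Int.emod_lt_of_pos (n-1) ha
  set q1 := (-n) / a
  set q2 := (n-1) / a
  set r1 := (-n) % a
  set r2 := (n-1) % a
  have key : a * (q1 + q2) = -1 - r1 - r2 := by linarith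
  rcases lt_trichotomy (q1 + q2) (-1) with h | h | h
  · nlinarith
  · linarith
  · nlinarith

private lemma stmt18_ceil_pair (a w γ ℓ k : ℤ) (ha : 0 < a) (hk : w * γ - 1 = a * k) :
    ⌈((ℓ * w : ℤ) : ℚ) / ((a : ℤ) : ℚ)⌉ + ⌈(((γ - ℓ) * w : ℤ) : ℚ) / ((a : ℤ) : ℚ)⌉
      = k + 1 := by
  rw [stmt18_ceil _ _ ha, stmt18_ceil _ _ ha]
  have h1 : -((γ - ℓ) * w) = (ℓ * w - 1) + (-k) * a := by linarith [hk]
  rw [h1, Int.add_mul_ediv_right _ _ ha.ne']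
  have h2 := stmt18_div_add_div (ℓ * w) a ha
  omega
/-- In the numerically Gorenstein case with `b₀ < d`:
`ℳ = min ℳ + 𝒮` if and only if `𝒮` is symmetric. -/
theorem stmt_18
    (d : ℕ) (hd : 3 ≤ d) (b₀ : ℤ) (hb₀d : b₀ < (d : ℤ))
    (α ω : Fin d → ℤ)
    (hω : ∀ i, 0 < ω i ∧ ω i < α i)
    (hcop : ∀ i, IsCoprime (α i) (ω i))
    (e : ℚ) (he : e = -(b₀ : ℚ) + ∑ i, (ω i : ℚ) / (α i : ℚ)) (heneg : e < 0)
    (N : ℤ → ℤ)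
    (hN : ∀ ℓ : ℤ, N ℓ = b₀ * ℓ - ∑ i, ⌈((ℓ * ω i : ℤ) : ℚ) / ((α i : ℤ) : ℚ)⌉)
    (γ : ℤ)
    (hγ : (γ : ℚ) = ((d : ℚ) - 2 - ∑ i, 1 / (α i : ℚ)) / |e|)
    (hGor : ∀ i, α i ∣ ω i * γ - 1)
    (f : ℤ) (hf : IsGreatest {ℓ : ℤ | 0 ≤ ℓ ∧ N ℓ ≤ -1} f)
    (m : ℤ) (hm : IsLeast {ℓ : ℤ | -1 ≤ N ℓ} m) :
    (∀ ℓ : ℤ, -1 ≤ N ℓ ↔ 0 ≤ N (ℓ - m)) ↔ (∀ ℓ : ℤ, 0 ≤ N ℓ ↔ N (f - ℓ) ≤ -1) := by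
  have hα : ∀ i, 0 < α i := fun i => (hω i).1.trans (hω i).2
  have hαQ : ∀ i, ((α i : ℚ)) ≠ 0 := fun i => Int.cast_ne_zero.mpr (hα i).ne'
  -- exact quotients k i
  choose k hk using fun i => hGor i
  -- integer identity: b₀ * γ - ∑ k i = d - 2
  have hkey : b₀ * γ - ∑ i, k i = (d : ℤ) - 2 := by
    have hQ : (b₀ : ℚ) * γ - ∑ i, (k i : ℚ) = (d : ℚ) - 2 := by
      have habs : |e| = -e := abs_of_neg heneg
      have hene : e ≠ 0 := heneg.ne
      have hγ' : (γ : ℚ) * (-e) = (d : ℚ) - 2 - ∑ i, 1 / (α i : ℚ) := by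
        rw [hγ, habs]
        field_simp
      have hki : ∀ i, (k i : ℚ) = (γ : ℚ) * (ω i : ℚ) / (α i : ℚ) - 1 / (α i : ℚ) := by
        intro i
        have := hk i
        have h2 : (ω i : ℚ) * (γ : ℚ) - 1 = (α i : ℚ) * (k i : ℚ) := by exact_mod_cast this
        field_simp [hαQ i]
        linarith
      have hsum : ∑ i, (k i : ℚ)
          = (γ : ℚ) * ∑ i, (ω i : ℚ) / (α i : ℚ) - ∑ i, 1 / (α i : ℚ) := by
        rw [Finset.mul_sum, ← Finset.sum_sub_distrib]
        exact Finset.sum_congr rfl fun i _ => by rw [hki i]; ring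
      rw [hsum]
      have : (γ : ℚ) * ∑ i, (ω i : ℚ) / (α i : ℚ) = (γ : ℚ) * b₀ + (γ : ℚ) * e := by
        rw [he]; ring
      rw [this]
      linarith [hγ']
    exact_mod_cast hQ
  -- duality
  have key : ∀ ℓ : ℤ, N ℓ + N (γ - ℓ) = -2 := by
    intro ℓ
    rw [hN ℓ, hN (γ - ℓ)]
    have hsum : ∑ i, ⌈((ℓ * ω i : ℤ) : ℚ) / ((α i : ℤ) : ℚ)⌉
        + ∑ i, ⌈(((γ - ℓ) * ω i : ℤ) : ℚ) / ((α i : ℤ) : ℚ)⌉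
        = ∑ i, (k i + 1) := by
      rw [← Finset.sum_add_distrib]
      exact Finset.sum_congr rfl fun i _ => stmt18_ceil_pair _ _ _ _ _ (hα i) (hk i)
    have : ∑ i, (k i + 1) = (∑ i, k i) + (d : ℤ) := by
      rw [Finset.sum_add_distrib, Finset.sum_const, Finset.card_univ, Fintype.card_fin]
      ring
    have hd3 : (3 : ℤ) ≤ (d : ℤ) := by exact_mod_cast hd
    linarith [hsum, hkey, this]
  -- f = γ - m
  have hA : ∀ ℓ : ℤ, γ - m < ℓ → 0 ≤ N ℓ := by
    intro ℓ hℓ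
    have h1 : ¬ (-1 ≤ N (γ - ℓ)) := fun h => by
      have := hm.2 h
      omega
    have := key ℓ
    omega
  have hfγ : f = γ - m := by
    have h1 : f ≤ γ - m := by
      by_contra h
      push_neg at h
      have := hA f h
      have := hf.1.2
      omega
    have h2 : γ - m ≤ f := by
      apply hf.2
      refine ⟨by linarith [hf.1.1], ?_⟩
      have := key m
      have h5 : -1 ≤ N m := hm.1
      omega
    omega
  constructor
  · intro H ℓ
    have h1 := key (m + ℓ)
    have h2 := (H (m + ℓ))
    have h3 : m + ℓ - m = ℓ := by ring
    rw [h3] at h2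
    have h4 : f - ℓ = γ - (m + ℓ) := by omega
    rw [h4]
    omega
  · intro H ℓ
    have h2 := H (ℓ - m)
    have h4 : f - (ℓ - m) = γ - ℓ := by omega
    rw [h4] at h2
    have h1 := key ℓ
    omega
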